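/- arXiv:1011.6448 — 5 statements merged into one kernel-verified Lean document; each statement's English description precedes it below -/
import Mathlib

section
/- For all y₀, y₁ ∈ {0,…,d−1}, the encoding |Ψ_{y₀y₁}⟩ = X^{y₀} Z^{y₁} |Ψ⟩ satisfies |⟨y₀|Ψ_{y₀y₁}⟩|² = 1/2 + 1/(2√d), where X, Z are the generalized Pauli matrices. -/
open Matrix Complex Finset

noncomputable section

def ω (d : ℕ) : ℂ := Complex.exp (2 * ↑Real.pi * Complex.I / (d : ℂ))

def Xp (d : ℕ) : Matrix (Fin d) (Fin d) ℂ :=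
  Matrix.of fun j k => if (j : ℕ) = ((k : ℕ) + 1) % d then 1 else 0

def Zp (d : ℕ) : Matrix (Fin d) (Fin d) ℂ :=
  Matrix.diagonal fun j => ω d ^ (j : ℕ)

def Fm (d : ℕ) : Matrix (Fin d) (Fin d) ℂ :=
  Matrix.of fun j k => ω d ^ ((j : ℕ) * (k : ℕ)) / ((Real.sqrt d : ℝ) : ℂ)

def ket (d : ℕ) (y : Fin d) : Fin d → ℂ := fun j => if j = y then 1 else 0

def e0 (d : ℕ) : Fin d → ℂ := fun j => if (j : ℕ) = 0 then 1 else 0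

def Psi (d : ℕ) : Fin d → ℂ :=
  (((Real.sqrt (2 * (1 + 1 / Real.sqrt d)) : ℝ) : ℂ))⁻¹ •
    (e0 d + (Fm d).mulVec (e0 d))

def dotc {d : ℕ} (v w : Fin d → ℂ) : ℂ := ∑ j, (starRingEnd ℂ) (v j) * w j

def outer {d : ℕ} (v : Fin d → ℂ) : Matrix (Fin d) (Fin d) ℂ :=
  Matrix.of fun i j => v i * (starRingEnd ℂ) (v j)

def enc (d : ℕ) (y₀ y₁ : Fin d) : Fin d → ℂ :=
  ((Xp d ^ (y₀ : ℕ)) * (Zp d ^ (y₁ : ℕ))).mulVec (Psi d)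

/-! Since X is the cyclic shift, (X^{y₀} v)(y₀) = v(0), and Z fixes |0⟩; hence
⟨y₀|X^{y₀} Z^{y₁}|Ψ⟩ = ⟨0|Ψ⟩. As F|0⟩ is the uniform vector with entries 1/√d, this amplitude is
(1 + 1/√d)/√(2(1 + 1/√d)), whose square is (1 + 1/√d)/2. -/

open Fin.NatCast

lemma dotc_ket {d : ℕ} (y : Fin d) (v : Fin d → ℂ) : dotc (ket d y) v = v y := by
  simp [dotc, ket]

lemma sq_div_sqrt_two_mul {x : ℝ} (hx : 0 ≤ x) : (x / Real.sqrt (2 * x)) ^ 2 = x / 2 := by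
  rw [div_pow, Real.sq_sqrt (by positivity)]
  rcases hx.eq_or_lt with rfl | hx
  · simp
  · field_simp

section

variable {d : ℕ} [NeZero d]

lemma Xp_mulVec_apply (v : Fin d → ℂ) (j : Fin d) : (Xp d *ᵥ v) j = v (j - 1) := by
  have hrow (k : Fin d) : ((j : ℕ) = ((k : ℕ) + 1) % d) ↔ k = j - 1 := by
    rw [eq_sub_iff_add_eq, ← Fin.val_inj, Fin.val_add, Fin.val_one', Nat.add_mod_mod, eq_comm]
  simp only [Xp, mulVec, dotProduct, of_apply, hrow, ite_mul, one_mul, zero_mul,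
    Finset.sum_ite_eq', Finset.mem_univ, if_true]

lemma Xp_pow_mulVec_apply (n : ℕ) (v : Fin d → ℂ) (j : Fin d) :
    (Xp d ^ n *ᵥ v) j = v (j - n) := by
  induction n generalizing j with
  | zero => simp
  | succ n ih =>
    rw [pow_succ', ← mulVec_mulVec, Xp_mulVec_apply, ih, Nat.cast_succ, sub_sub, add_comm]

lemma Zp_pow_mulVec_apply_zero (n : ℕ) (v : Fin d → ℂ) : (Zp d ^ n *ᵥ v) 0 = v 0 := by
  simp [Zp, diagonal_pow, mulVec_diagonal]

lemma enc_apply_self (y₀ y₁ : Fin d) : enc d y₀ y₁ y₀ = Psi d 0 := by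
  rw [enc, ← mulVec_mulVec, Xp_pow_mulVec_apply, Fin.cast_val_eq_self, sub_self,
    Zp_pow_mulVec_apply_zero]

lemma Fm_mulVec_e0 : Fm d *ᵥ e0 d = fun _ => 1 / (Real.sqrt d : ℂ) := by
  ext j
  rw [mulVec, dotProduct, Finset.sum_eq_single 0]
  · simp [Fm, e0]
  · intro k _ hk
    simp [e0, Fin.val_eq_zero_iff, hk]
  · simp

lemma Psi_apply_zero :
    Psi d 0 = (((1 + 1 / Real.sqrt d) / Real.sqrt (2 * (1 + 1 / Real.sqrt d)) : ℝ) : ℂ) := by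
  simp only [Psi, Fm_mulVec_e0, e0, Pi.smul_apply, Pi.add_apply, Fin.val_zero, if_true,
    smul_eq_mul]
  push_cast
  ring

end

theorem stmt_2_general (d : ℕ) (y₀ y₁ : Fin d) :
    ‖dotc (ket d y₀) (enc d y₀ y₁)‖ ^ 2 = 1 / 2 + 1 / (2 * Real.sqrt d) := by
  have : NeZero d := NeZero.of_pos y₀.pos
  rw [dotc_ket, enc_apply_self, Psi_apply_zero, Complex.norm_real, Real.norm_eq_abs, sq_abs,
    sq_div_sqrt_two_mul (by positivity)]
  ring

theorem stmt_2 (d : ℕ) (hd : Nat.Prime d) (y₀ y₁ : Fin d) :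
    ‖dotc (ket d y₀) (enc d y₀ y₁)‖ ^ 2 = 1 / 2 + 1 / (2 * Real.sqrt d) :=
  stmt_2_general d y₀ y₁
end
end

section
/- The guessing probability of the full string is exactly 1/d: for the uniform ensemble of the d² pure states |Ψ_{y₀y₁}⟩ = X^{y₀}Z^{y₁}|Ψ⟩ each with probability 1/d², the maximum over all POVMs {M_{y₀y₁}} of (1/d²)∑_{y₀,y₁} ⟨Ψ_{y₀y₁}| M_{y₀y₁} |Ψ_{y₀y₁}⟩ equals 1/d. -/
open Matrix Complex Finset
open scoped ComplexOrder

noncomputable section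

/-!
Every POVM satisfies `tr (M_y |ψ_y⟩⟨ψ_y|) ≤ tr M_y` for unit vectors `ψ_y`, since `M_y` and the
projection `1 - |ψ_y⟩⟨ψ_y|` are both positive; summing gives at most `tr 1 = d`. Conversely the
`d²` unit vectors `ψ_ab = X^a Z^b Ψ` form a tight frame: averaging `A ↦ Z^b A Z^{-b}` over `b`
kills the off-diagonal entries (orthogonality of characters), and averaging `A ↦ X^a A X^{-a}`
over `a` spreads the diagonal evenly, so `∑ |ψ_ab⟩⟨ψ_ab| = d • 1`. Hence
`M_ab = d⁻¹ |ψ_ab⟩⟨ψ_ab|` is a POVM, and it attains the bound.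
-/

section PositiveMatrix

variable {n : Type*} [Fintype n]

theorem vecMulVec_mulVec_star (U : Matrix n n ℂ) (v : n → ℂ) :
    vecMulVec (U *ᵥ v) (star (U *ᵥ v)) = U * vecMulVec v (star v) * Uᴴ := by
  rw [star_mulVec, mul_vecMulVec, vecMulVec_mul]

theorem isIdempotentElem_vecMulVec_star {v : n → ℂ} (hv : star v ⬝ᵥ v = 1) :
    IsIdempotentElem (vecMulVec v (star v)) := by
  rw [IsIdempotentElem, vecMulVec_mul_vecMulVec, hv, one_smul]

variable [DecidableEq n]

theorem Matrix.permMatrix_mul_diagonal_mul_conjTranspose {R : Type*} [CommRing R] [StarRing R]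
    (σ : Equiv.Perm n) (v : n → R) :
    σ.permMatrix R * diagonal v * (σ.permMatrix R)ᴴ = diagonal (v ∘ σ) := by
  rw [conjTranspose_permMatrix, Equiv.Perm.permMatrix, Equiv.Perm.permMatrix,
    PEquiv.toMatrix_toPEquiv_mul, PEquiv.mul_toMatrix_toPEquiv]
  exact submatrix_diagonal_equiv v σ

theorem Matrix.permMatrix_mem_unitary {R : Type*} [CommRing R] [StarRing R] (σ : Equiv.Perm n) :
    σ.permMatrix R ∈ unitary (Matrix n n R) := by
  rw [Unitary.mem_iff, star_eq_conjTranspose, conjTranspose_permMatrix, ← permMatrix_mul,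
    ← permMatrix_mul, mul_inv_cancel, inv_mul_cancel, permMatrix_one]
  exact ⟨rfl, rfl⟩

theorem Matrix.diagonal_mem_unitary {R : Type*} [CommRing R] [StarRing R] {u : n → R}
    (hu : ∀ i, star (u i) * u i = 1) : diagonal u ∈ unitary (Matrix n n R) := by
  rw [Unitary.mem_iff, star_eq_conjTranspose, diagonal_conjTranspose, diagonal_mul_diagonal',
    diagonal_mul_diagonal']
  simp only [Pi.star_apply, hu, mul_comm (u _), diagonal_one, and_self]

theorem star_mulVec_dotProduct_mulVec_of_mem_unitary {U : Matrix n n ℂ}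
    (hU : U ∈ unitary (Matrix n n ℂ)) (v : n → ℂ) : star (U *ᵥ v) ⬝ᵥ (U *ᵥ v) = star v ⬝ᵥ v := by
  rw [star_mulVec, ← dotProduct_mulVec, mulVec_mulVec, ← star_eq_conjTranspose,
    Unitary.star_mul_self_of_mem hU, one_mulVec]

theorem re_trace_mul_vecMulVec_le {M : Matrix n n ℂ} (hM : M.PosSemidef) {v : n → ℂ}
    (hv : star v ⬝ᵥ v = 1) : (M * vecMulVec v (star v)).trace.re ≤ M.trace.re := by
  set P := vecMulVec v (star v)
  have hQ : (1 - P)ᴴ = 1 - P := by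
    rw [conjTranspose_sub, conjTranspose_one, conjTranspose_vecMulVec, star_star]
  have hQQ : (1 - P) * (1 - P) = 1 - P := (isIdempotentElem_vecMulVec_star hv).one_sub.eq
  have hnonneg : 0 ≤ (M * (1 - P)).trace :=
    calc (0 : ℂ) ≤ ((1 - P) * M * (1 - P)ᴴ).trace := (hM.mul_mul_conjTranspose_same _).trace_nonneg
      _ = (M * (1 - P)).trace := by rw [hQ, trace_mul_cycle, hQQ, trace_mul_comm]
  rw [Matrix.mul_sub, Matrix.mul_one, trace_sub, sub_nonneg] at hnonneg
  exact (Complex.le_def.1 hnonneg).1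

variable {ι : Type*} [Fintype ι]

theorem sum_re_trace_mul_vecMulVec_le {M : ι → Matrix n n ℂ} (hM : ∀ y, (M y).PosSemidef)
    (hsum : ∑ y, M y = 1) {v : ι → n → ℂ} (hv : ∀ y, star (v y) ⬝ᵥ v y = 1) :
    ∑ y, (M y * vecMulVec (v y) (star (v y))).trace.re ≤ Fintype.card n :=
  calc ∑ y, (M y * vecMulVec (v y) (star (v y))).trace.re
      ≤ ∑ y, (M y).trace.re := sum_le_sum fun y _ => re_trace_mul_vecMulVec_le (hM y) (hv y)
    _ = Fintype.card n := by rw [← Complex.re_sum, ← trace_sum, hsum, trace_one]; simp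

theorem isGreatest_sum_re_trace_mul_vecMulVec {v : ι → n → ℂ} (hv : ∀ y, star (v y) ⬝ᵥ v y = 1)
    {c : ℝ} (hc : 0 < c) (hframe : ∑ y, vecMulVec (v y) (star (v y)) = c • 1) :
    IsGreatest {x : ℝ | ∃ M : ι → Matrix n n ℂ, (∀ y, (M y).PosSemidef) ∧ ∑ y, M y = 1 ∧
      x = ∑ y, (M y * vecMulVec (v y) (star (v y))).trace.re} (Fintype.card n) := by
  have htr (y : ι) : (vecMulVec (v y) (star (v y))).trace = 1 := by
    rw [trace_vecMulVec, dotProduct_comm, hv]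
  have hcard : (Fintype.card ι : ℝ) = c * Fintype.card n := by
    simpa [trace_sum, htr, trace_smul] using congrArg (fun A : Matrix n n ℂ => A.trace.re) hframe
  refine ⟨⟨fun y => c⁻¹ • vecMulVec (v y) (star (v y)), fun y => ?_, ?_, ?_⟩, ?_⟩
  · exact (posSemidef_vecMulVec_self_star _).smul (inv_nonneg.2 hc.le)
  · rw [← smul_sum, hframe, smul_smul, inv_mul_cancel₀ hc.ne', one_smul]
  · simp only [smul_mul, (isIdempotentElem_vecMulVec_star (hv _)).eq, trace_smul, htr,
      Complex.real_smul, mul_one, Complex.ofReal_re, sum_const, card_univ, nsmul_eq_mul, hcard]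
    field_simp
  · rintro x ⟨M, hM, hsum, rfl⟩
    exact sum_re_trace_mul_vecMulVec_le hM hsum hv

end PositiveMatrix

section Weyl

variable {d : ℕ}

theorem isPrimitiveRoot_ω [NeZero d] : IsPrimitiveRoot (ω d) d := by
  simpa [ω] using Complex.isPrimitiveRoot_exp d (NeZero.ne d)

theorem star_ω_pow_mul_self [NeZero d] (j : ℕ) : star (ω d ^ j) * ω d ^ j = 1 := by
  rw [Complex.star_def, Complex.conj_mul', norm_pow, isPrimitiveRoot_ω.norm'_eq_one (NeZero.ne d)]
  simp

theorem sum_ω_pow_pow_mul_star [NeZero d] (j m : Fin d) :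
    ∑ b : Fin d, (ω d ^ (j : ℕ)) ^ (b : ℕ) * star ((ω d ^ (m : ℕ)) ^ (b : ℕ))
      = if j = m then (d : ℂ) else 0 := by
  obtain ⟨z, hz⟩ : ∃ z, ω d ^ (j : ℕ) * star (ω d ^ (m : ℕ)) = z := ⟨_, rfl⟩
  have hterm (b : ℕ) : (ω d ^ (j : ℕ)) ^ b * star ((ω d ^ (m : ℕ)) ^ b) = z ^ b := by
    rw [star_pow, ← mul_pow, hz]
  simp_rw [hterm]
  rw [Fin.sum_univ_eq_sum_range (z ^ ·)]
  split_ifs with hjm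
  · rw [hjm, mul_comm, star_ω_pow_mul_self] at hz
    simp [← hz]
  · have hz1 : z ≠ 1 := fun hz1 => hjm <| Fin.ext <| isPrimitiveRoot_ω.pow_inj j.isLt m.isLt <| by
      rw [← mul_one (ω d ^ (j : ℕ)), ← star_ω_pow_mul_self (d := d) m, ← mul_assoc, hz, hz1,
        one_mul]
    have hpow (k : ℕ) : (ω d ^ k) ^ d = 1 := by
      rw [← pow_mul, mul_comm, pow_mul, isPrimitiveRoot_ω.pow_eq_one, one_pow]
    have hzd : z ^ d = 1 := by rw [← hz, mul_pow, ← star_pow, hpow, hpow, star_one, one_mul]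
    rw [geom_sum_eq hz1, hzd, sub_self, zero_div]

theorem Xp_eq_permMatrix [NeZero d] :
    Xp d = Equiv.Perm.permMatrix ℂ (Equiv.subRight (1 : Fin d)) := by
  ext j k
  rw [Equiv.Perm.permMatrix, PEquiv.toMatrix_toPEquiv_apply, Pi.single_apply, Xp, of_apply,
    Equiv.subRight_apply]
  refine if_congr ?_ rfl rfl
  rw [eq_sub_iff_add_eq, Fin.ext_iff, Fin.val_add, Fin.val_one', Nat.add_mod_mod, eq_comm]

open Fin.NatCast in
theorem Xp_pow_eq_permMatrix [NeZero d] (n : ℕ) :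
    Xp d ^ n = Equiv.Perm.permMatrix ℂ (Equiv.subRight (n : Fin d)) := by
  induction n with
  | zero =>
    ext j k
    simp [one_apply]
  | succ n ih =>
    rw [pow_succ, ih, Xp_eq_permMatrix, ← permMatrix_mul]
    congr 1
    ext j
    simp [sub_sub]

theorem Zp_pow (n : ℕ) : Zp d ^ n = diagonal fun j : Fin d => (ω d ^ (j : ℕ)) ^ n := by
  rw [Zp, diagonal_pow]; rfl

theorem sum_Zp_pow_mul_mul_conjTranspose [NeZero d] (A : Matrix (Fin d) (Fin d) ℂ) :
    ∑ b : Fin d, Zp d ^ (b : ℕ) * A * (Zp d ^ (b : ℕ))ᴴ = (d : ℂ) • diagonal A.diag := by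
  ext j m
  simp only [Zp_pow, diagonal_conjTranspose, Matrix.sum_apply, Matrix.smul_apply, mul_diagonal,
    diagonal_mul, Pi.star_apply]
  calc ∑ b : Fin d, (ω d ^ (j : ℕ)) ^ (b : ℕ) * A j m * star ((ω d ^ (m : ℕ)) ^ (b : ℕ))
      = A j m * ∑ b : Fin d, (ω d ^ (j : ℕ)) ^ (b : ℕ) * star ((ω d ^ (m : ℕ)) ^ (b : ℕ)) := by
        rw [mul_sum]; congr 1; ext b; ring
    _ = _ := by
      rw [sum_ω_pow_pow_mul_star, diagonal_apply]
      split_ifs with h <;> simp [h, mul_comm]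

theorem sum_Xp_pow_mul_diagonal_mul_conjTranspose [NeZero d] (v : Fin d → ℂ) :
    ∑ a : Fin d, Xp d ^ (a : ℕ) * diagonal v * (Xp d ^ (a : ℕ))ᴴ = (∑ j, v j) • 1 := by
  simp_rw [Xp_pow_eq_permMatrix, Fin.cast_val_eq_self, permMatrix_mul_diagonal_mul_conjTranspose]
  ext j m
  rw [Matrix.sum_apply, Matrix.smul_apply, one_apply]
  simp only [diagonal_apply, Function.comp_apply, Equiv.subRight_apply]
  split_ifs with h
  · simpa using (Equiv.subLeft j).sum_comp v
  · simp

def weyl (d : ℕ) (y : Fin d × Fin d) : Matrix (Fin d) (Fin d) ℂ :=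
  Xp d ^ (y.1 : ℕ) * Zp d ^ (y.2 : ℕ)

theorem weyl_mem_unitary [NeZero d] (y : Fin d × Fin d) :
    weyl d y ∈ unitary (Matrix (Fin d) (Fin d) ℂ) := by
  refine mul_mem (pow_mem ?_ _) (pow_mem ?_ _)
  · rw [Xp_eq_permMatrix]
    exact permMatrix_mem_unitary _
  · exact diagonal_mem_unitary fun j => star_ω_pow_mul_self _

theorem sum_weyl_mul_mul_conjTranspose [NeZero d] (A : Matrix (Fin d) (Fin d) ℂ) :
    ∑ y, weyl d y * A * (weyl d y)ᴴ = ((d : ℂ) * A.trace) • 1 :=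
  calc ∑ y, weyl d y * A * (weyl d y)ᴴ
      = ∑ a : Fin d, Xp d ^ (a : ℕ) * (∑ b : Fin d, Zp d ^ (b : ℕ) * A * (Zp d ^ (b : ℕ))ᴴ) *
          (Xp d ^ (a : ℕ))ᴴ := by
        rw [Fintype.sum_prod_type]
        simp only [weyl, conjTranspose_mul, mul_sum, sum_mul, Matrix.mul_assoc]
    _ = ((d : ℂ) * A.trace) • 1 := by
        simp only [sum_Zp_pow_mul_mul_conjTranspose, Matrix.mul_smul, Matrix.smul_mul, ← smul_sum,
          sum_Xp_pow_mul_diagonal_mul_conjTranspose, smul_smul, trace]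

theorem sum_vecMulVec_weyl_mulVec [NeZero d] (v : Fin d → ℂ) :
    ∑ y, vecMulVec (weyl d y *ᵥ v) (star (weyl d y *ᵥ v)) = ((d : ℂ) * (star v ⬝ᵥ v)) • 1 := by
  simp_rw [vecMulVec_mulVec_star, sum_weyl_mul_mul_conjTranspose, trace_vecMulVec, dotProduct_comm]

end Weyl

theorem stmt_7_general (d : ℕ) (Ψ : Fin d → ℂ) (hΨ : dotc Ψ Ψ = 1) :
    IsGreatest {x : ℝ | ∃ M : Fin d × Fin d → Matrix (Fin d) (Fin d) ℂ,
        (∀ y, (M y).PosSemidef) ∧ (∑ y, M y = 1) ∧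
        x = ((d : ℝ) ^ 2)⁻¹ * ∑ y₀ : Fin d, ∑ y₁ : Fin d,
          ((M (y₀, y₁) * outer (((Xp d ^ (y₀ : ℕ)) * (Zp d ^ (y₁ : ℕ))).mulVec Ψ)).trace).re}
      ((d : ℝ)⁻¹) := by
  have : NeZero d := ⟨by rintro rfl; simp [dotc] at hΨ⟩
  have hunit (y : Fin d × Fin d) : star (weyl d y *ᵥ Ψ) ⬝ᵥ (weyl d y *ᵥ Ψ) = 1 :=
    (star_mulVec_dotProduct_mulVec_of_mem_unitary (weyl_mem_unitary y) Ψ).trans hΨ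
  have hframe : ∑ y, vecMulVec (weyl d y *ᵥ Ψ) (star (weyl d y *ᵥ Ψ)) = (d : ℝ) • 1 := by
    rw [sum_vecMulVec_weyl_mulVec, show star Ψ ⬝ᵥ Ψ = 1 from hΨ, mul_one, Nat.cast_smul_eq_nsmul,
      Nat.cast_smul_eq_nsmul]
  obtain ⟨⟨M, hM, hsum, hval⟩, hmax⟩ :=
    isGreatest_sum_re_trace_mul_vecMulVec hunit (Nat.cast_pos.2 (NeZero.pos d)) hframe
  have hscale : (d : ℝ)⁻¹ = ((d : ℝ) ^ 2)⁻¹ * Fintype.card (Fin d) := by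
    rw [Fintype.card_fin]; field_simp
  rw [hscale]
  refine ⟨⟨M, hM, hsum, ?_⟩, ?_⟩
  · rw [hval, Fintype.sum_prod_type]; rfl
  · rintro _ ⟨M', hM', hsum', rfl⟩
    gcongr
    exact hmax ⟨M', hM', hsum', by rw [Fintype.sum_prod_type]; rfl⟩

theorem stmt_7 (d : ℕ) (hd : Nat.Prime d) (Ψ : Fin d → ℂ) (hΨ : dotc Ψ Ψ = 1) :
    IsGreatest {x : ℝ | ∃ M : Fin d × Fin d → Matrix (Fin d) (Fin d) ℂ,
        (∀ y, (M y).PosSemidef) ∧ (∑ y, M y = 1) ∧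
        x = ((d : ℝ) ^ 2)⁻¹ * ∑ y₀ : Fin d, ∑ y₁ : Fin d,
          ((M (y₀, y₁) * outer (((Xp d ^ (y₀ : ℕ)) * (Zp d ^ (y₁ : ℕ))).mulVec Ψ)).trace).re}
      ((d : ℝ)⁻¹) :=
  stmt_7_general d Ψ hΨ
end
end

section
/- For the uniform ensemble over y₀ ∈ {0,…,d−1} of the states σ_{y₀} = (1/d)∑_{y₁} |Ψ_{y₀y₁}⟩⟨Ψ_{y₀y₁}|, the maximum over all POVMs {M_{y₀}} of (1/d)∑_{y₀} tr(M_{y₀} σ_{y₀}) equals 1/2 + 1/(2√d). -/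
open Matrix Complex Finset
open scoped ComplexOrder

noncomputable section

/-!
Averaging over the clock powers `Z^{y₁}` dephases: by orthogonality of the characters
`k ↦ ω^{jk}`, `(1/d) ∑_k Z^k |v⟩⟨v| Z^{-k}` is the diagonal matrix of the `|v_j|²`. Hence
`σ_{y₀}` is diagonal with entries `|Ψ_{j - y₀}|²`, all at most `|Ψ_0|² = 1/2 + 1/(2√d)`.
Since the POVM elements have nonnegative diagonals and total trace `d`, no measurement scores
more than this, and measuring in the computational basis attains it.
-/

open ComplexConjugate

namespace Weyl

variable {d : ℕ}

lemma omega_isPrimitiveRoot (hd : d ≠ 0) : IsPrimitiveRoot (ω d) d :=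
  Complex.isPrimitiveRoot_exp d hd

lemma sum_omega_pow_mul_conj [NeZero d] (a b : Fin d) :
    ∑ k : Fin d, ω d ^ ((a : ℕ) * k) * conj (ω d ^ ((b : ℕ) * k)) =
      if a = b then (d : ℂ) else 0 := by
  have hω := omega_isPrimitiveRoot (NeZero.ne d)
  have hω0 : ω d ≠ 0 := hω.ne_zero (NeZero.ne d)
  have hconj : conj (ω d) = (ω d)⁻¹ :=
    (Complex.inv_eq_conj (hω.norm'_eq_one (NeZero.ne d))).symm
  set ζ := ω d ^ (a : ℕ) / ω d ^ (b : ℕ)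
  have hterm : ∀ k : ℕ, ω d ^ ((a : ℕ) * k) * conj (ω d ^ ((b : ℕ) * k)) = ζ ^ k := by
    intro k
    rw [map_pow, hconj, inv_pow, pow_mul, pow_mul, div_pow, div_eq_mul_inv]
  simp only [hterm]
  rw [Fin.sum_univ_eq_sum_range (ζ ^ ·)]
  split_ifs with hab
  · simp [ζ, hab, hω0]
  · have hζ : ζ ≠ 1 := fun h =>
      hab (Fin.ext (hω.pow_inj a.is_lt b.is_lt ((div_eq_one_iff_eq (pow_ne_zero _ hω0)).mp h)))
    have hζd : ζ ^ d = 1 := by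
      rw [div_pow, ← pow_mul, ← pow_mul, mul_comm, pow_mul, mul_comm, pow_mul, hω.pow_eq_one]
      simp
    rw [geom_sum_eq hζ, hζd, sub_self, zero_div]

lemma Xp_mulVec_apply [NeZero d] (w : Fin d → ℂ) (j : Fin d) : (Xp d *ᵥ w) j = w (j - 1) := by
  have hcond : ∀ k : Fin d, ((j : ℕ) = ((k : ℕ) + 1) % d) ↔ j - 1 = k := by
    intro k
    rw [sub_eq_iff_eq_add, Fin.ext_iff, Fin.val_add, Fin.val_one', Nat.add_mod_mod, eq_comm]
  simp [Xp, mulVec, dotProduct, hcond]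

open Fin.NatCast in
lemma Xp_pow_mulVec_apply [NeZero d] (a : ℕ) (w : Fin d → ℂ) (j : Fin d) :
    (Xp d ^ a *ᵥ w) j = w (j - a) := by
  induction a generalizing j with
  | zero => simp
  | succ a ih =>
    rw [pow_succ', ← mulVec_mulVec, Xp_mulVec_apply, ih, Nat.cast_succ, sub_sub, add_comm]

lemma Zp_pow_mulVec_apply (k : ℕ) (v : Fin d → ℂ) (j : Fin d) :
    (Zp d ^ k *ᵥ v) j = ω d ^ ((j : ℕ) * k) * v j := by
  rw [Zp, diagonal_pow, mulVec_diagonal, Pi.pow_apply, pow_mul]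

lemma outer_apply {v : Fin d → ℂ} (i j : Fin d) : outer v i j = v i * conj (v j) := rfl

lemma inv_smul_sum_outer_Zp_pow_mulVec [NeZero d] (v : Fin d → ℂ) :
    (d : ℂ)⁻¹ • ∑ k : Fin d, outer (Zp d ^ (k : ℕ) *ᵥ v) =
      diagonal fun j => (Complex.normSq (v j) : ℂ) := by
  ext i j
  have hd : (d : ℂ) ≠ 0 := Nat.cast_ne_zero.mpr (NeZero.ne d)
  simp only [Matrix.smul_apply, Matrix.sum_apply, outer_apply, Zp_pow_mulVec_apply, map_mul,
    smul_eq_mul]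
  calc (d : ℂ)⁻¹ * ∑ k : Fin d,
        ω d ^ ((i : ℕ) * k) * v i * (conj (ω d ^ ((j : ℕ) * k)) * conj (v j))
      = (d : ℂ)⁻¹ * (v i * conj (v j)) *
          ∑ k : Fin d, ω d ^ ((i : ℕ) * k) * conj (ω d ^ ((j : ℕ) * k)) := by
        rw [Finset.mul_sum, Finset.mul_sum]
        exact Finset.sum_congr rfl fun k _ => by ring
    _ = _ := by
        rw [sum_omega_pow_mul_conj, diagonal_apply]
        split_ifs with hij
        · subst hij; rw [Complex.mul_conj]; field_simp
        · simp

lemma enc_apply [NeZero d] (y₀ y₁ j : Fin d) :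
    enc d y₀ y₁ j = (Zp d ^ (y₁ : ℕ) *ᵥ Psi d) (j - y₀) := by
  rw [enc, ← mulVec_mulVec, Xp_pow_mulVec_apply, Fin.cast_val_eq_self]

lemma inv_smul_sum_outer_enc [NeZero d] (y₀ : Fin d) :
    (d : ℂ)⁻¹ • ∑ y₁ : Fin d, outer (enc d y₀ y₁) =
      diagonal fun j => (Complex.normSq (Psi d (j - y₀)) : ℂ) := by
  ext i j
  have := congrFun₂ (inv_smul_sum_outer_Zp_pow_mulVec (Psi d)) (i - y₀) (j - y₀)
  simp only [Matrix.smul_apply, Matrix.sum_apply, outer_apply, diagonal_apply, sub_left_inj]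
    at this ⊢
  simpa only [enc_apply, outer_apply] using this

lemma e0_eq_single [NeZero d] : e0 d = Pi.single 0 1 := by
  funext j
  simp only [e0, Pi.single_apply, Fin.val_eq_zero_iff]

lemma Psi_eq [NeZero d] :
    Psi d = fun j => ((((if j = 0 then 1 else 0) + 1 / √d) / √(2 * (1 + 1 / √d)) : ℝ) : ℂ) := by
  funext j
  simp only [Psi, e0_eq_single, mulVec_single_one, Pi.smul_apply, Pi.add_apply, Pi.single_apply,
    Fm, col_apply, of_apply, Fin.val_zero, mul_zero, pow_zero, smul_eq_mul]
  split_ifs <;> push_cast <;> ring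

lemma normSq_Psi [NeZero d] (j : Fin d) :
    Complex.normSq (Psi d j) = ((if j = 0 then 1 else 0) + 1 / √d) ^ 2 / (2 * (1 + 1 / √d)) := by
  rw [Psi_eq, Complex.normSq_ofReal, ← sq, div_pow, Real.sq_sqrt (by positivity)]

lemma normSq_Psi_zero [NeZero d] : Complex.normSq (Psi d 0) = 1 / 2 + 1 / (2 * √d) := by
  have : 0 < 1 + 1 / √d := by positivity
  rw [normSq_Psi, if_pos rfl]
  field_simp

lemma normSq_Psi_le [NeZero d] (j : Fin d) : Complex.normSq (Psi d j) ≤ 1 / 2 + 1 / (2 * √d) := by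
  rw [← normSq_Psi_zero, normSq_Psi, normSq_Psi, if_pos rfl]
  gcongr
  split_ifs <;> norm_num

end Weyl

section POVM

variable {ι n : Type*} [Fintype ι] [Fintype n] [DecidableEq n]

lemma Matrix.re_trace_mul_diagonal_ofReal (A : Matrix n n ℂ) (p : n → ℝ) :
    (A * diagonal fun j => (p j : ℂ)).trace.re = ∑ j, (A j j).re * p j := by
  simp [Matrix.trace, mul_diagonal, Complex.re_sum]

lemma Matrix.sum_re_trace_mul_diagonal_le {M : ι → Matrix n n ℂ} (hM : ∀ i, (M i).PosSemidef)
    (hsum : ∑ i, M i = 1) {p : ι → n → ℝ} {c : ℝ} (hp : ∀ i j, p i j ≤ c) :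
    ∑ i, (M i * diagonal fun j => (p i j : ℂ)).trace.re ≤ Fintype.card n * c := by
  have htrace : ∑ i, ∑ j, (M i j j).re = Fintype.card n := by
    have := congrArg (fun A => (Matrix.trace A).re) hsum
    simp only [trace_sum, trace_one, Complex.re_sum, Complex.natCast_re] at this
    simpa only [Matrix.trace, diag, Complex.re_sum] using this
  calc ∑ i, (M i * diagonal fun j => (p i j : ℂ)).trace.re
      = ∑ i, ∑ j, (M i j j).re * p i j := by simp only [re_trace_mul_diagonal_ofReal]
    _ ≤ ∑ i, ∑ j, (M i j j).re * c := by
        gcongr with i _ j _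
        · exact (Complex.nonneg_iff.mp (hM i).diag_nonneg).1
        · exact hp i j
    _ = Fintype.card n * c := by simp only [← Finset.sum_mul, htrace]

lemma Matrix.sum_diagonal_single_one :
    ∑ i, diagonal (Pi.single i (1 : ℂ)) = (1 : Matrix n n ℂ) := by
  ext j k
  simp [Matrix.sum_apply, diagonal_apply, Pi.single_apply, one_apply]

lemma Matrix.trace_diagonal_single_one_mul (i : n) (A : Matrix n n ℂ) :
    (diagonal (Pi.single i 1) * A).trace = A i i := by
  simp [Matrix.trace, diagonal_mul, Pi.single_apply]

end POVM

theorem stmt_9 (d : ℕ) (hd : Nat.Prime d) :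
    IsGreatest {x : ℝ | ∃ M : Fin d → Matrix (Fin d) (Fin d) ℂ,
        (∀ y₀, (M y₀).PosSemidef) ∧ (∑ y₀, M y₀ = 1) ∧
        x = (d : ℝ)⁻¹ * ∑ y₀ : Fin d,
          ((M y₀ * (((d : ℂ))⁻¹ • ∑ y₁ : Fin d, outer (enc d y₀ y₁))).trace).re}
      (1 / 2 + 1 / (2 * Real.sqrt d)) := by
  have : NeZero d := ⟨hd.ne_zero⟩
  have hd0 : (d : ℝ) ≠ 0 := by exact_mod_cast hd.ne_zero
  simp only [Weyl.inv_smul_sum_outer_enc]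
  refine ⟨⟨fun y₀ => diagonal (Pi.single y₀ 1), fun y₀ => ?_, sum_diagonal_single_one, ?_⟩, ?_⟩
  · exact posSemidef_diagonal_iff.mpr (Pi.single_nonneg.mpr zero_le_one)
  · simp only [trace_diagonal_single_one_mul, diagonal_apply_eq, sub_self, Complex.ofReal_re,
      Weyl.normSq_Psi_zero, sum_const, card_univ, Fintype.card_fin, nsmul_eq_mul]
    field_simp
  · rintro x ⟨M, hM, hsum, rfl⟩
    have hsum_le := sum_re_trace_mul_diagonal_le hM hsum fun y₀ j => Weyl.normSq_Psi_le (j - y₀)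
    rw [Fintype.card_fin] at hsum_le
    calc _ ≤ (d : ℝ)⁻¹ * (d * (1 / 2 + 1 / (2 * √d))) := by gcongr
      _ = _ := by field_simp
end
end

section
/- Classical min-entropy splitting: let Y₀, Y₁, E be finite random variables with H_∞(Y₀Y₁ | E) ≥ α. Then there exists a binary random variable C (jointly distributed with Y₀, Y₁, E, i.e. an extension of the joint distribution) such that H_∞(Y_C, C | E) ≥ α/2. Concretely, defining C = 1 iff ∑_{y₀} P(Y₀=y₀, Y₁=y₁ | E=e) ≥ 2^{−α/2} for the realized (y₁, e) works. -/
open Finset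

theorem stmt_14 {Y E : Type*} [Fintype Y] [DecidableEq Y] [Fintype E] [Nonempty Y] [Nonempty E]
    (P : Y × Y × E → ℝ) (hP0 : ∀ x, 0 ≤ P x) (hP1 : ∑ x, P x = 1) (α : ℝ)
    (hα : -Real.logb 2 (∑ e : E,
        Finset.univ.sup' Finset.univ_nonempty (fun y : Y × Y => P (y.1, y.2, e))) ≥ α) :
    ∃ Q : Y × Y × E × Fin 2 → ℝ,
      (∀ x, 0 ≤ Q x) ∧
      (∀ y₀ y₁ e, Q (y₀, y₁, e, 0) + Q (y₀, y₁, e, 1) = P (y₀, y₁, e)) ∧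
      -Real.logb 2 (∑ e : E,
          Finset.univ.sup' Finset.univ_nonempty
            (fun vc : Y × Fin 2 => ∑ y₀ : Y, ∑ y₁ : Y,
              (if (if vc.2 = 0 then y₀ else y₁) = vc.1 then Q (y₀, y₁, e, vc.2) else 0)))
        ≥ α / 2 := by
  classical
  set m : E → ℝ := fun e =>
    Finset.univ.sup' Finset.univ_nonempty (fun y : Y × Y => P (y.1, y.2, e)) with hm
  set pE : E → ℝ := fun e => ∑ y : Y × Y, P (y.1, y.2, e) with hpE
  set S : Y → E → ℝ := fun b e => ∑ a : Y, P (a, b, e) with hSdef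
  set τ : E → ℝ := fun e => Real.sqrt (m e * pE e) with hτ
  set f : Y → E → Fin 2 := fun b e => if S b e < τ e then 1 else 0 with hfdef
  have hPm : ∀ a b e, P (a, b, e) ≤ m e := fun a b e =>
    Finset.le_sup' (f := fun y : Y × Y => P (y.1, y.2, e)) (mem_univ (a, b))
  have hm0 : ∀ e, 0 ≤ m e := fun e =>
    le_trans (hP0 (Classical.arbitrary Y, Classical.arbitrary Y, e)) (hPm _ _ e)
  have hpE0 : ∀ e, 0 ≤ pE e := fun e => Finset.sum_nonneg fun y _ => hP0 _
  have hS0 : ∀ b e, 0 ≤ S b e := fun b e => Finset.sum_nonneg fun a _ => hP0 _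
  have hτ0 : ∀ e, 0 ≤ τ e := fun e => Real.sqrt_nonneg _
  have hSsum : ∀ e, ∑ b, S b e = pE e := by
    intro e
    simp only [hSdef, hpE, Fintype.sum_prod_type]
    exact Finset.sum_comm
  have hpEsum : ∑ e, pE e = 1 := by
    rw [← hP1]
    simp only [hpE, Fintype.sum_prod_type]
    rw [Finset.sum_comm]
    exact Finset.sum_congr rfl fun a _ => Finset.sum_comm
  set Q : Y × Y × E × Fin 2 → ℝ :=
    fun x => if x.2.2.2 = f x.2.1 x.2.2.1 then P (x.1, x.2.1, x.2.2.1) else 0 with hQ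
  have hQ0 : ∀ x, 0 ≤ Q x := by
    intro x
    simp only [hQ]
    split
    · exact hP0 _
    · exact le_rfl
  have hQsum : ∀ y₀ y₁ e, Q (y₀, y₁, e, 0) + Q (y₀, y₁, e, 1) = P (y₀, y₁, e) := by
    intro a b e
    have h2 : f b e = 0 ∨ f b e = 1 := by omega
    rcases h2 with h | h <;> simp [hQ, h]
  set g : E → Y × Fin 2 → ℝ := fun e vc => ∑ y₀ : Y, ∑ y₁ : Y,
      (if (if vc.2 = 0 then y₀ else y₁) = vc.1 then Q (y₀, y₁, e, vc.2) else 0) with hg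
  have hg0 : ∀ e vc, 0 ≤ g e vc := by
    intro e vc
    refine Finset.sum_nonneg fun y₀ _ => Finset.sum_nonneg fun y₁ _ => ?_
    split_ifs <;> first | exact hQ0 _ | exact le_rfl
  have hg_zero : ∀ e v, g e (v, 0) = ∑ b, (if (0 : Fin 2) = f b e then P (v, b, e) else 0) := by
    intro e v
    simp only [hg, hQ]
    rw [Finset.sum_comm]
    refine Finset.sum_congr rfl fun b _ => ?_
    simp [Finset.sum_ite_eq']
  have hg_one : ∀ e v, g e (v, 1) = (if (1 : Fin 2) = f v e then S v e else 0) := by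
    intro e v
    simp only [hg, hQ, hSdef]
    by_cases hfv : (1 : Fin 2) = f v e
    · simp [Finset.sum_ite_eq', ← hfv]
    · simp [Finset.sum_ite_eq', hfv]
  -- key bound
  have key : ∀ e (vc : Y × Fin 2), g e vc ≤ τ e := by
    rintro e ⟨v, c⟩
    have hc : c = 0 ∨ c = 1 := by omega
    rcases hc with rfl | rfl
    · rw [hg_zero]
      by_cases hτe : τ e = 0
      · have hP00 : ∀ b, P (v, b, e) = 0 := by
          intro b
          have h1 : m e * pE e = 0 := by
            have h2 := Real.sqrt_eq_zero'.mp hτe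
            nlinarith [hm0 e, hpE0 e]
          rcases mul_eq_zero.mp h1 with h | h
          · exact le_antisymm (h ▸ hPm v b e) (hP0 _)
          · have h3 : ∀ y ∈ (Finset.univ : Finset (Y × Y)), P (y.1, y.2, e) = 0 :=
              (Finset.sum_eq_zero_iff_of_nonneg (fun y _ => hP0 _)).mp h
            exact h3 (v, b) (mem_univ _)
        rw [hτe]
        simp [hP00]
      · have hτpos : 0 < τ e := lt_of_le_of_ne (hτ0 e) (Ne.symm hτe)
        have hterm : ∀ b, (if (0 : Fin 2) = f b e then P (v, b, e) else 0)
            ≤ (m e / τ e) * S b e := by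
          intro b
          split_ifs with h
          · have hns : τ e ≤ S b e := by
              by_contra hlt
              push_neg at hlt
              simp only [hfdef, if_pos hlt] at h
              exact absurd h (by decide)
            calc P (v, b, e) ≤ m e := hPm v b e
              _ = (m e / τ e) * τ e := by field_simp
              _ ≤ (m e / τ e) * S b e :=
                  mul_le_mul_of_nonneg_left hns (div_nonneg (hm0 e) (hτ0 e))
          · exact mul_nonneg (div_nonneg (hm0 e) (hτ0 e)) (hS0 b e)
        calc (∑ b, if (0 : Fin 2) = f b e then P (v, b, e) else 0)
            ≤ ∑ b, (m e / τ e) * S b e := Finset.sum_le_sum fun b _ => hterm b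
          _ = (m e / τ e) * pE e := by rw [← Finset.mul_sum, hSsum e]
          _ = τ e := by
              have h2 : τ e * τ e = m e * pE e :=
                Real.mul_self_sqrt (mul_nonneg (hm0 e) (hpE0 e))
              field_simp
              linarith [h2]
    · rw [hg_one]
      split_ifs with h
      · have hlt : S v e < τ e := by
          by_contra hge
          simp only [hfdef, if_neg hge] at h
          exact absurd h (by decide)
        exact le_of_lt hlt
      · exact hτ0 e
  -- positivity of things
  obtain ⟨x0, hx0⟩ : ∃ x, 0 < P x := by
    by_contra h
    push_neg at h
    have h1 : ∑ x, P x = 0 := Finset.sum_eq_zero fun x _ => le_antisymm (h x) (hP0 x)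
    rw [hP1] at h1
    norm_num at h1
  obtain ⟨a0, b0, e0⟩ := x0
  have hMpos : 0 < ∑ e, m e :=
    Finset.sum_pos' (fun e _ => hm0 e) ⟨e0, mem_univ e0, lt_of_lt_of_le hx0 (hPm a0 b0 e0)⟩
  have hα' : -Real.logb 2 (∑ e, m e) ≥ α := hα
  have hMle : (∑ e, m e) ≤ (2 : ℝ) ^ (-α) := by
    have hlog : Real.logb 2 (∑ e, m e) ≤ -α := by linarith
    calc (∑ e, m e) = (2 : ℝ) ^ (Real.logb 2 (∑ e, m e)) :=
          (Real.rpow_logb two_pos (by norm_num) hMpos).symm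
      _ ≤ (2 : ℝ) ^ (-α) := Real.rpow_le_rpow_of_exponent_le one_le_two hlog
  set β : ℝ := (2 : ℝ) ^ (-(α / 2)) with hβ
  have hβpos : 0 < β := Real.rpow_pos_of_pos two_pos _
  have hβsq : β * β = (2 : ℝ) ^ (-α) := by
    rw [hβ, ← Real.rpow_add two_pos]
    ring_nf
  have hCS : (∑ e, τ e) ^ 2 ≤ (∑ e, m e) * (∑ e, pE e) :=
    Finset.sum_sq_le_sum_mul_sum_of_sq_eq_mul Finset.univ
      (fun e _ => hm0 e) (fun e _ => hpE0 e)
      (fun e _ => Real.sq_sqrt (mul_nonneg (hm0 e) (hpE0 e)))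
  have hτsum : (∑ e, τ e) ≤ β := by
    have h1 : (∑ e, τ e) ^ 2 ≤ β * β := by
      calc (∑ e, τ e) ^ 2 ≤ (∑ e, m e) * (∑ e, pE e) := hCS
        _ = ∑ e, m e := by rw [hpEsum, mul_one]
        _ ≤ (2 : ℝ) ^ (-α) := hMle
        _ = β * β := hβsq.symm
    have h2 : 0 ≤ ∑ e, τ e := Finset.sum_nonneg fun e _ => hτ0 e
    nlinarith
  -- positivity of the target sum
  have hTpos : 0 < ∑ e, Finset.univ.sup' Finset.univ_nonempty (g e) := by
    refine Finset.sum_pos' (fun e _ => ?_) ⟨e0, mem_univ e0, ?_⟩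
    · exact le_trans (hg0 e (Classical.arbitrary Y, 0))
        (Finset.le_sup' (g e) (mem_univ _))
    · have hgle : ∀ (vc : Y × Fin 2), 0 < g e0 vc →
          0 < Finset.univ.sup' Finset.univ_nonempty (g e0) := fun vc h =>
        lt_of_lt_of_le h (Finset.le_sup' (g e0) (mem_univ vc))
      have h2 : f b0 e0 = 0 ∨ f b0 e0 = 1 := by omega
      rcases h2 with h | h
      · refine hgle (a0, 0) ?_
        rw [hg_zero]
        have hb0 : (0:ℝ) < (if (0 : Fin 2) = f b0 e0 then P (a0, b0, e0) else 0) := by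
          rw [h, if_pos rfl]; exact hx0
        refine lt_of_lt_of_le hb0 (Finset.single_le_sum (f := fun b =>
          if (0 : Fin 2) = f b e0 then P (a0, b, e0) else 0) (fun b _ => ?_) (mem_univ b0))
        show (0:ℝ) ≤ if (0 : Fin 2) = f b e0 then P (a0, b, e0) else 0
        split_ifs
        · exact hP0 _
        · exact le_rfl
      · refine hgle (b0, 1) ?_
        rw [hg_one, h, if_pos rfl]
        exact lt_of_lt_of_le hx0
          (Finset.single_le_sum (f := fun a => P (a, b0, e0)) (fun a _ => hP0 _) (mem_univ a0))
  -- assemble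
  refine ⟨Q, hQ0, hQsum, ?_⟩
  show -Real.logb 2 (∑ e, Finset.univ.sup' Finset.univ_nonempty (g e)) ≥ α / 2
  have hTle : (∑ e, Finset.univ.sup' Finset.univ_nonempty (g e)) ≤ β :=
    le_trans (Finset.sum_le_sum fun e _ =>
      Finset.sup'_le _ _ fun vc _ => key e vc) hτsum
  have hlogT : Real.logb 2 (∑ e, Finset.univ.sup' Finset.univ_nonempty (g e))
      ≤ Real.logb 2 β := Real.logb_le_logb_of_le (by norm_num) hTpos hTle
  have hlogβ : Real.logb 2 β = -(α / 2) := Real.logb_rpow two_pos (by norm_num)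
  linarith
end

section
/- Quantum violation of splitting: let d be prime and ρ_{Y₀Y₁EC} = (1/d²)∑_{y₀,y₁} |y₀⟩⟨y₀| ⊗ |y₁⟩⟨y₁| ⊗ |Ψ_{y₀y₁}⟩⟨Ψ_{y₀y₁}| ⊗ σ^C_{y₀y₁} be any extension by a classical bit C of the encoding state (with σ^C_{y₀y₁} = q_{y₀y₁}|0⟩⟨0| + (1−q_{y₀y₁})|1⟩⟨1| arbitrary). Then for each c ∈ {0,1}, conditioned on C = c, the probability of guessing Y_c from the register E is at least 1/2 + 1/(2√d). Equivalently, H_∞(Y_C | E, C) ≤ −log₂(1/2 + 1/(2√d)) ≤ 1. -/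
/-!
For every key `(y₀, y₁)` the computational basis finds `y₀`, and the Fourier basis `f_v = F|v⟩`
finds `y₁`, with probability exactly `1/2 + 1/(2√d)`. The shift `X^{y₀}` maps `|0⟩` to `|y₀⟩`
and `Z^{y₁}` acts on `|0⟩` as a phase, so `⟨y₀|X^{y₀}Z^{y₁}Ψ⟩ = ⟨0|Ψ⟩`. Dually `X` is diagonal
and `Z` is a shift in the Fourier basis, so `⟨f_{y₁}|X^{y₀}Z^{y₁}Ψ⟩` is `⟨f_0|Ψ⟩` up to a phase.
Finally `⟨0|Ψ⟩ = ⟨f_0|Ψ⟩`: `Ψ` is symmetric in `|0⟩` and `f_0`, and their overlap `1/√d` is real.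
Since these probabilities do not depend on the key, the bound holds whatever the weights `q`,
and the entropy bound follows because the guessing probability is at least `1/2`.
-/

open Matrix Complex Finset
open scoped ComplexOrder

noncomputable section

lemma outer_eq_vecMulVec {d : ℕ} (v : Fin d → ℂ) : outer v = vecMulVec v (star v) := rfl

lemma dotc_eq_dotProduct {d : ℕ} (v w : Fin d → ℂ) : dotc v w = star v ⬝ᵥ w := rfl

lemma posSemidef_outer {d : ℕ} (v : Fin d → ℂ) : (outer v).PosSemidef :=
  posSemidef_vecMulVec_self_star v

lemma re_trace_outer_mul_outer {d : ℕ} (u w : Fin d → ℂ) :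
    ((outer u * outer w).trace).re = Complex.normSq (dotc u w) := by
  rw [outer_eq_vecMulVec, outer_eq_vecMulVec, vecMulVec_mul_vecMulVec, trace_vecMulVec,
    dotProduct_smul, smul_eq_mul, dotc_eq_dotProduct, dotProduct_star, dotProduct_comm w,
    Complex.star_def, Complex.mul_conj, Complex.ofReal_re]

lemma ket_eq_single {d : ℕ} (y : Fin d) : ket d y = Pi.single y 1 := by
  ext j
  simp [ket, Pi.single_apply]

lemma sum_outer_ket (d : ℕ) : ∑ v : Fin d, outer (ket d v) = 1 := by
  simp only [ket_eq_single, outer_eq_vecMulVec, ← Pi.single_star, star_one,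
    ← single_eq_single_vecMulVec_single, sum_single_one]

lemma omega_isPrimitiveRoot {d : ℕ} (hd : d ≠ 0) : IsPrimitiveRoot (ω d) d :=
  Complex.isPrimitiveRoot_exp d hd

lemma norm_omega (d : ℕ) : ‖ω d‖ = 1 := by
  rw [ω, show 2 * (Real.pi : ℂ) * I / d = ((2 * Real.pi / d : ℝ) : ℂ) * I by push_cast; ring,
    Complex.norm_exp_ofReal_mul_I]

lemma normSq_omega_pow (d n : ℕ) : Complex.normSq (ω d ^ n) = 1 := by
  rw [Complex.normSq_eq_norm_sq, norm_pow, norm_omega, one_pow, one_pow]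

lemma conj_omega_pow_mul_self (d n : ℕ) : (starRingEnd ℂ) (ω d ^ n) * ω d ^ n = 1 := by
  rw [mul_comm, Complex.mul_conj, normSq_omega_pow, Complex.ofReal_one]

lemma omega_pow_mod (d m : ℕ) : ω d ^ (m % d) = ω d ^ m := by
  rcases eq_or_ne d 0 with rfl | hd
  · rw [Nat.mod_zero]
  · exact (pow_eq_pow_mod m (omega_isPrimitiveRoot hd).pow_eq_one).symm

def fourierVec (d : ℕ) (v : Fin d) : Fin d → ℂ := (Fm d).col v

lemma fourierVec_apply {d : ℕ} (v j : Fin d) :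
    fourierVec d v j = ω d ^ ((j : ℕ) * v) / ((Real.sqrt d : ℝ) : ℂ) := rfl

lemma sum_omega_pow_mul_conj {d : ℕ} (i j : Fin d) :
    ∑ v : Fin d, ω d ^ ((i : ℕ) * v) * (starRingEnd ℂ) (ω d ^ ((j : ℕ) * v)) =
      if i = j then (d : ℂ) else 0 := by
  have hω := omega_isPrimitiveRoot i.pos.ne'
  set x := ω d ^ (i : ℕ) * (starRingEnd ℂ) (ω d ^ (j : ℕ)) with hx_def
  have hx : ∀ v : ℕ, ω d ^ ((i : ℕ) * v) * (starRingEnd ℂ) (ω d ^ ((j : ℕ) * v)) = x ^ v := by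
    intro v
    rw [mul_pow, pow_mul, pow_mul, map_pow]
  simp only [hx]
  rw [Fin.sum_univ_eq_sum_range (x ^ ·)]
  split_ifs with hij
  · have hx1 : x = 1 := by rw [hx_def, hij, mul_comm, conj_omega_pow_mul_self]
    simp [hx1]
  · have hx1 : x ≠ 1 := by
      intro h
      refine hij (Fin.ext (hω.pow_inj i.isLt j.isLt ?_))
      calc ω d ^ (i : ℕ) = x * ω d ^ (j : ℕ) := by
            rw [mul_assoc, conj_omega_pow_mul_self, mul_one]
        _ = ω d ^ (j : ℕ) := by rw [h, one_mul]
    have hxd : x ^ d = 1 := by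
      have hpow : ∀ k : ℕ, (ω d ^ k) ^ d = 1 := fun k => by
        rw [← pow_mul, mul_comm, pow_mul, hω.pow_eq_one, one_pow]
      rw [mul_pow, ← map_pow, hpow, hpow, map_one, one_mul]
    rw [geom_sum_eq hx1, hxd, sub_self, zero_div]

lemma sum_outer_fourierVec (d : ℕ) : ∑ v : Fin d, outer (fourierVec d v) = 1 := by
  ext i j
  have hd : (d : ℂ) ≠ 0 := Nat.cast_ne_zero.mpr i.pos.ne'
  have hsqrt : ((Real.sqrt d : ℝ) : ℂ) * ((Real.sqrt d : ℝ) : ℂ) = d := by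
    rw [← Complex.ofReal_mul, Real.mul_self_sqrt (Nat.cast_nonneg d), Complex.ofReal_natCast]
  have hentry : ∀ v : Fin d, outer (fourierVec d v) i j =
      ω d ^ ((i : ℕ) * v) * (starRingEnd ℂ) (ω d ^ ((j : ℕ) * v)) / d := by
    intro v
    simp only [outer, of_apply, fourierVec_apply, map_div₀, Complex.conj_ofReal]
    rw [div_mul_div_comm, hsqrt]
  rw [Matrix.sum_apply, Finset.sum_congr rfl fun v _ => hentry v, ← Finset.sum_div,
    sum_omega_pow_mul_conj, one_apply]
  split_ifs <;> simp [hd]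

section shift

variable {d : ℕ} [NeZero d]

lemma Xp_mulVec (u : Fin d → ℂ) (j : Fin d) : (Xp d *ᵥ u) j = u (j - 1) := by
  have hcond : ∀ k : Fin d, (j : ℕ) = ((k : ℕ) + 1) % d ↔ k = j - 1 := fun k => by
    rw [eq_sub_iff_add_eq, Fin.ext_iff, Fin.val_add, Fin.val_one', Nat.add_mod_mod, eq_comm]
  simp only [mulVec, dotProduct, Xp, of_apply, hcond, ite_mul, one_mul, zero_mul,
    Finset.sum_ite_eq', Finset.mem_univ, if_true]

open Fin.NatCast in
lemma Xp_pow_mulVec (n : ℕ) (u : Fin d → ℂ) (j : Fin d) : (Xp d ^ n *ᵥ u) j = u (j - n) := by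
  induction n generalizing j with
  | zero => simp
  | succ n ih => rw [pow_succ', ← mulVec_mulVec, Xp_mulVec, ih, sub_sub, Nat.cast_succ, add_comm]

lemma e0_eq_single : e0 d = Pi.single 0 1 := by
  ext j
  simp only [e0, Pi.single_apply, Fin.val_eq_zero_iff]

end shift

lemma Zp_pow_mulVec {d : ℕ} (n : ℕ) (u : Fin d → ℂ) (j : Fin d) :
    (Zp d ^ n *ᵥ u) j = ω d ^ ((j : ℕ) * n) * u j := by
  rw [Zp, diagonal_pow, mulVec_diagonal, Pi.pow_apply, pow_mul]

lemma enc_apply {d : ℕ} [NeZero d] (y₀ y₁ j : Fin d) :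
    enc d y₀ y₁ j = ω d ^ (((j - y₀ : Fin d) : ℕ) * y₁) * Psi d (j - y₀) := by
  rw [enc, ← mulVec_mulVec, Xp_pow_mulVec, Fin.cast_val_eq_self, Zp_pow_mulVec]

lemma Psi_eq {d : ℕ} [NeZero d] :
    Psi d = ((Real.sqrt (2 * (1 + 1 / Real.sqrt d)) : ℝ) : ℂ)⁻¹ •
      (Pi.single 0 1 + fourierVec d 0) := by
  rw [Psi, e0_eq_single, mulVec_single_one]
  rfl

section overlaps

variable {d : ℕ} [NeZero d]

lemma dotc_ket_enc (y₀ y₁ : Fin d) : dotc (ket d y₀) (enc d y₀ y₁) = dotc (ket d 0) (Psi d) := by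
  simp only [dotc_eq_dotProduct, ket_eq_single, ← Pi.single_star, star_one, single_dotProduct,
    one_mul, enc_apply, sub_self, Fin.val_zero, zero_mul, pow_zero]

lemma dotc_fourierVec_enc (y₀ y₁ : Fin d) :
    dotc (fourierVec d y₁) (enc d y₀ y₁) =
      (starRingEnd ℂ) (ω d ^ ((y₀ : ℕ) * y₁)) * dotc (fourierVec d 0) (Psi d) := by
  have hphase : ∀ k : Fin d, ω d ^ (((k + y₀ : Fin d) : ℕ) * y₁) =
      ω d ^ ((k : ℕ) * y₁) * ω d ^ ((y₀ : ℕ) * y₁) := fun k => by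
    rw [pow_mul, Fin.val_add, omega_pow_mod, ← pow_mul, add_mul, pow_add]
  -- substituting `j = k + y₀`, the phase `ω ^ (k * y₁)` from `Z ^ y₁` cancels against `f_{y₁}`
  rw [dotc, dotc, Finset.mul_sum, ← Equiv.sum_comp (Equiv.addRight y₀)]
  refine Finset.sum_congr rfl fun k _ => ?_
  simp only [Equiv.coe_addRight, enc_apply, add_sub_cancel_right, fourierVec_apply, hphase,
    map_div₀, map_mul, Fin.val_zero, mul_zero, pow_zero, map_one, Complex.conj_ofReal]
  linear_combination (starRingEnd ℂ) (ω d ^ ((y₀ : ℕ) * y₁)) / ((Real.sqrt d : ℝ) : ℂ) *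
    Psi d k * conj_omega_pow_mul_self d ((k : ℕ) * y₁)

lemma fourierVec_zero : fourierVec d 0 = fun _ => (((Real.sqrt d)⁻¹ : ℝ) : ℂ) := by
  ext j
  simp [fourierVec_apply]

lemma dotc_Psi (u : Fin d → ℂ) :
    dotc u (Psi d) = ((Real.sqrt (2 * (1 + 1 / Real.sqrt d)) : ℝ) : ℂ)⁻¹ *
      (dotc u (Pi.single 0 1) + dotc u (fourierVec d 0)) := by
  rw [Psi_eq, dotc_eq_dotProduct, dotProduct_smul, dotProduct_add, smul_eq_mul]
  rfl

lemma dotc_ket_zero_Psi :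
    dotc (ket d 0) (Psi d) =
      (((Real.sqrt (2 * (1 + 1 / Real.sqrt d)))⁻¹ * (1 + (Real.sqrt d)⁻¹) : ℝ) : ℂ) := by
  rw [dotc_Psi, ket_eq_single, fourierVec_zero]
  simp [dotc_eq_dotProduct]

lemma dotc_fourierVec_zero_Psi : dotc (fourierVec d 0) (Psi d) = dotc (ket d 0) (Psi d) := by
  have hd : (0 : ℝ) < d := Nat.cast_pos.mpr (NeZero.pos d)
  have hsq : (d : ℂ) * ((((Real.sqrt d)⁻¹ : ℝ) : ℂ) * (((Real.sqrt d)⁻¹ : ℝ) : ℂ)) = 1 := by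
    rw [← Complex.ofReal_mul, ← mul_inv, Real.mul_self_sqrt hd.le, Complex.ofReal_inv,
      Complex.ofReal_natCast, mul_inv_cancel₀ (by exact_mod_cast hd.ne')]
  rw [dotc_Psi, fourierVec_zero, dotc_eq_dotProduct, dotc_eq_dotProduct, dotProduct_single]
  simp only [dotProduct, Pi.star_apply, Complex.star_def, Complex.conj_ofReal, mul_one,
    Finset.sum_const, Finset.card_univ, Fintype.card_fin, nsmul_eq_mul, hsq]
  rw [dotc_ket_zero_Psi]
  push_cast
  ring

lemma normSq_dotc_ket_zero_Psi :
    Complex.normSq (dotc (ket d 0) (Psi d)) = 1 / 2 + 1 / (2 * Real.sqrt d) := by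
  have hs : 0 < Real.sqrt d := Real.sqrt_pos.mpr (Nat.cast_pos.mpr (NeZero.pos d))
  rw [dotc_ket_zero_Psi, Complex.normSq_ofReal, ← sq, mul_pow, inv_pow,
    Real.sq_sqrt (by positivity)]
  field_simp

end overlaps

lemma re_trace_outer_ket_mul_outer_enc {d : ℕ} (y₀ y₁ : Fin d) :
    ((outer (ket d y₀) * outer (enc d y₀ y₁)).trace).re = 1 / 2 + 1 / (2 * Real.sqrt d) := by
  have := y₀.neZero
  rw [re_trace_outer_mul_outer, dotc_ket_enc, normSq_dotc_ket_zero_Psi]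

lemma re_trace_outer_fourierVec_mul_outer_enc {d : ℕ} (y₀ y₁ : Fin d) :
    ((outer (fourierVec d y₁) * outer (enc d y₀ y₁)).trace).re =
      1 / 2 + 1 / (2 * Real.sqrt d) := by
  have := y₀.neZero
  rw [re_trace_outer_mul_outer, dotc_fourierVec_enc, map_mul, Complex.normSq_conj,
    normSq_omega_pow, one_mul, dotc_fourierVec_zero_Psi, normSq_dotc_ket_zero_Psi]

lemma neg_logb_two_le_one_of_half_le {x : ℝ} (hx : 1 / 2 ≤ x) : -Real.logb 2 x ≤ 1 := by
  have h := Real.logb_le_logb_of_le one_lt_two (by norm_num) hx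
  rw [one_div, Real.logb_inv, Real.logb_self_eq_one one_lt_two] at h
  linarith

theorem stmt_15_general (d : ℕ) (q : Fin d × Fin d → ℝ) :
    (∀ c : Fin 2, ∃ M : Fin d → Matrix (Fin d) (Fin d) ℂ,
      (∀ v, (M v).PosSemidef) ∧ (∑ v, M v = 1) ∧
      (1 / 2 + 1 / (2 * Real.sqrt d)) *
          (∑ y₀ : Fin d, ∑ y₁ : Fin d,
            ((d : ℝ) ^ 2)⁻¹ * (if c = 0 then q (y₀, y₁) else 1 - q (y₀, y₁)))
        ≤ ∑ y₀ : Fin d, ∑ y₁ : Fin d,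
            (((d : ℝ) ^ 2)⁻¹ * (if c = 0 then q (y₀, y₁) else 1 - q (y₀, y₁))) *
              ((M (if c = 0 then y₀ else y₁) * outer (enc d y₀ y₁)).trace).re) ∧
    -Real.logb 2 (1 / 2 + 1 / (2 * Real.sqrt d)) ≤ 1 := by
  refine ⟨fun c => ?_, neg_logb_two_le_one_of_half_le (le_add_of_nonneg_right (by positivity))⟩
  obtain ⟨M, hM_psd, hM_sum, hM_guess⟩ : ∃ M : Fin d → Matrix (Fin d) (Fin d) ℂ,
      (∀ v, (M v).PosSemidef) ∧ ∑ v, M v = 1 ∧ ∀ y₀ y₁ : Fin d,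
        ((M (if c = 0 then y₀ else y₁) * outer (enc d y₀ y₁)).trace).re =
          1 / 2 + 1 / (2 * Real.sqrt d) := by
    by_cases hc : c = 0
    · refine ⟨fun v => outer (ket d v), fun v => posSemidef_outer _, sum_outer_ket d,
        fun y₀ y₁ => ?_⟩
      simpa only [if_pos hc] using re_trace_outer_ket_mul_outer_enc y₀ y₁
    · refine ⟨fun v => outer (fourierVec d v), fun v => posSemidef_outer _,
        sum_outer_fourierVec d, fun y₀ y₁ => ?_⟩
      simpa only [if_neg hc] using re_trace_outer_fourierVec_mul_outer_enc y₀ y₁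
  refine ⟨M, hM_psd, hM_sum, le_of_eq ?_⟩
  simp only [hM_guess, ← Finset.sum_mul]
  ring

theorem stmt_15 (d : ℕ) (hd : Nat.Prime d)
    (q : Fin d × Fin d → ℝ) (hq0 : ∀ y, 0 ≤ q y) (hq1 : ∀ y, q y ≤ 1) :
    (∀ c : Fin 2, ∃ M : Fin d → Matrix (Fin d) (Fin d) ℂ,
      (∀ v, (M v).PosSemidef) ∧ (∑ v, M v = 1) ∧
      (1 / 2 + 1 / (2 * Real.sqrt d)) *
          (∑ y₀ : Fin d, ∑ y₁ : Fin d,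
            ((d : ℝ) ^ 2)⁻¹ * (if c = 0 then q (y₀, y₁) else 1 - q (y₀, y₁)))
        ≤ ∑ y₀ : Fin d, ∑ y₁ : Fin d,
            (((d : ℝ) ^ 2)⁻¹ * (if c = 0 then q (y₀, y₁) else 1 - q (y₀, y₁))) *
              ((M (if c = 0 then y₀ else y₁) * outer (enc d y₀ y₁)).trace).re) ∧
    -Real.logb 2 (1 / 2 + 1 / (2 * Real.sqrt d)) ≤ 1 :=
  stmt_15_general d q
end
end
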